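/- Let k be a field and S = k⟨x₁,x₂,x₃,x₄⟩/(x₃x₁-x₁x₃, x₃x₂-x₁x₄, x₄x₁-x₂x₃, x₄x₂-x₂x₄, x₁x₂-x₂x₃, x₄x₃-x₁x₄). Then the right syzygy module syz_r(x₁,x₂) = {(f,g) ∈ S² : x₁f + x₂g = 0} is generated as a right S-module by the single element (x₂, -x₃). -/

import Mathlib

/- k is a field; S = k⟨x₁,x₂,x₃,x₄⟩/(x₃x₁-x₁x₃, x₃x₂-x₁x₄, x₄x₁-x₂x₃,
x₄x₂-x₂x₄, x₁x₂-x₂x₃, x₄x₃-x₁x₄).  The right syzygy module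
syz_r(x₁,x₂) = {(f,g) ∈ S² : x₁f + x₂g = 0} is generated as a right S-module
(i.e. as an Sᵐᵒᵖ-module) by the single element (x₂, -x₃). -/

noncomputable section

abbrev NW := ℕ × ℕ × ℕ × ℕ

namespace NW

def deg (w : NW) : ℕ := w.1 + w.2.1 + w.2.2.1 + w.2.2.2

def L2 (w : NW) : NW := (w.1 + 1, w.2.1, w.2.2.1, w.2.2.2)

def L4 : NW → NW
  | (j, 0, k, l) => (j, k, 0, l+1)
  | (j, i+1, k, l) => (j+1, i, k+1, l)

lemma deg_L2 (w : NW) : deg (L2 w) = deg w + 1 := by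
  rcases w with ⟨j, i, k, l⟩; simp only [L2, deg]; omega

lemma deg_L4 (w : NW) : deg (L4 w) = deg w + 1 := by
  rcases w with ⟨j, i | i, k, l⟩ <;> simp only [L4, deg] <;> omega

def L13 : Bool → NW → NW
  | false, (0, i, k, l) => (0, i+1, k, l)
  | true,  (0, i, k, l) => (0, i, k+1, l)
  | false, (j+1, i, k, l) => L2 (L13 true (j, i, k, l))
  | true,  (j+1, i, k, l) => L13 false (L4 (j, i, k, l))
termination_by b w => (deg w, if b then 1 else 0)
decreasing_by
  · apply Prod.Lex.left; simp only [deg]; omega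
  · rw [deg_L4]
    have : deg (j.succ, i, k, l) = deg (j, i, k, l) + 1 := by simp only [deg]; omega
    rw [this]
    apply Prod.Lex.right'
    · omega
    · simp

def L1 : NW → NW := L13 false
def L3 : NW → NW := L13 true

lemma L1_zero (i k l : ℕ) : L1 (0, i, k, l) = (0, i+1, k, l) := by rw [L1, L13]
lemma L3_zero (i k l : ℕ) : L3 (0, i, k, l) = (0, i, k+1, l) := by rw [L3, L13]
lemma L1_succ (j i k l : ℕ) : L1 (j+1, i, k, l) = L2 (L3 (j, i, k, l)) := by rw [L1, L13, L3]
lemma L3_succ (j i k l : ℕ) : L3 (j+1, i, k, l) = L1 (L4 (j, i, k, l)) := by rw [L3, L13, L1]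

lemma L1_L2 (w : NW) : L1 (L2 w) = L2 (L3 w) := by
  rcases w with ⟨j, i, k, l⟩; exact L1_succ j i k l

lemma L3_L2 (w : NW) : L3 (L2 w) = L1 (L4 w) := by
  rcases w with ⟨j, i, k, l⟩; exact L3_succ j i k l

lemma L4_L2 (w : NW) : L4 (L2 w) = L2 (L4 w) := by
  rcases w with ⟨j, i | i, k, l⟩ <;> simp only [L2, L4]

lemma L4_succ (j i k l : ℕ) : L4 (j+1, i, k, l) = L2 (L4 (j, i, k, l)) := L4_L2 (j, i, k, l)

lemma C_zero (i k l : ℕ) : L4 (L1 (0, i, k, l)) = L2 (L3 (0, i, k, l)) := by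
  rw [L1_zero, L3_zero]; simp only [L4, L2]

lemma A_zero (i k l : ℕ) : L3 (L1 (0, i, k, l)) = L1 (L3 (0, i, k, l)) := by
  rw [L1_zero, L3_zero, L3_zero, L1_zero]

lemma F_zero (i k l : ℕ) : L4 (L3 (0, i, k, l)) = L1 (L4 (0, i, k, l)) := by
  rcases i with _ | i
  · rw [L3_zero]; simp only [L4]; rw [L1_zero]
  · rw [L3_zero]; simp only [L4]
    rw [L1_succ, L3_zero]; simp only [L2]

lemma comm_aux : ∀ d : ℕ, ∀ w : NW, deg w ≤ d →
    (L4 (L1 w) = L2 (L3 w)) ∧ (L3 (L1 w) = L1 (L3 w)) ∧ (L4 (L3 w) = L1 (L4 w)) := by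
  intro d
  induction d with
  | zero =>
    rintro ⟨j, i, k, l⟩ hw
    have hj : j = 0 := by simp only [deg] at hw ⊢; omega
    subst hj
    exact ⟨C_zero i k l, A_zero i k l, F_zero i k l⟩
  | succ d ih =>
    have hC : ∀ w : NW, deg w ≤ d + 1 → L4 (L1 w) = L2 (L3 w) := by
      rintro ⟨(_ | j), i, k, l⟩ hw
      · exact C_zero i k l
      · have hd : deg (j, i, k, l) ≤ d := by simp only [deg] at hw ⊢; omega
        rw [L1_succ, L4_L2, L3_succ, (ih _ hd).2.2]
    have hA : ∀ w : NW, deg w ≤ d + 1 → L3 (L1 w) = L1 (L3 w) := by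
      rintro ⟨(_ | j), i, k, l⟩ hw
      · exact A_zero i k l
      · have hd : deg (j, i, k, l) ≤ d := by simp only [deg] at hw ⊢; omega
        rw [L1_succ, L3_L2, (ih _ hd).2.2, L3_succ]
    have hF : ∀ w : NW, deg w ≤ d + 1 → L4 (L3 w) = L1 (L4 w) := by
      rintro ⟨(_ | j), i, k, l⟩ hw
      · exact F_zero i k l
      · have hd4 : deg (L4 (j, i, k, l)) ≤ d + 1 := by
          rw [deg_L4]; simp only [deg] at hw ⊢; omega
        rw [L3_succ, hC _ hd4, L4_succ, L1_L2]
    exact fun w hw => ⟨hC w hw, hA w hw, hF w hw⟩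

lemma L4_L1 (w : NW) : L4 (L1 w) = L2 (L3 w) := (comm_aux (deg w) w le_rfl).1
lemma L3_L1 (w : NW) : L3 (L1 w) = L1 (L3 w) := (comm_aux (deg w) w le_rfl).2.1
lemma L4_L3 (w : NW) : L4 (L3 w) = L1 (L4 w) := (comm_aux (deg w) w le_rfl).2.2

lemma inj_L2 : Function.Injective L2 := by
  rintro ⟨j, i, k, l⟩ ⟨j', i', k', l'⟩ h
  simp only [L2, Prod.mk.injEq, true_and, and_true] at h
  simp only [Prod.mk.injEq, true_and, and_true]; omega

lemma inj_L4 : Function.Injective L4 := by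
  rintro ⟨j, (_ | i), k, l⟩ ⟨j', (_ | i'), k', l'⟩ h <;>
    simp only [L4, Prod.mk.injEq, true_and, and_true] at h <;> simp only [Prod.mk.injEq, true_and, and_true] <;> omega

lemma inj_aux : ∀ d : ℕ, ∀ w w' : NW, deg w ≤ d → deg w' ≤ d →
    (L1 w = L1 w' → w = w') ∧ (L3 w = L3 w' → w = w') := by
  intro d
  induction d with
  | zero =>
    rintro ⟨j, i, k, l⟩ ⟨j', i', k', l'⟩ hw hw'
    have hj : j = 0 ∧ j' = 0 := by simp only [deg] at hw hw'; omega
    obtain ⟨rfl, rfl⟩ := hj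
    constructor
    · rw [L1_zero, L1_zero]; simp only [Prod.mk.injEq, true_and, and_true]; omega
    · rw [L3_zero, L3_zero]; simp only [Prod.mk.injEq, true_and, and_true]; omega
  | succ d ih =>
    have h1 : ∀ w w' : NW, deg w ≤ d + 1 → deg w' ≤ d + 1 → L1 w = L1 w' → w = w' := by
      rintro ⟨(_ | j), i, k, l⟩ ⟨(_ | j'), i', k', l'⟩ hw hw' h
      · rw [L1_zero, L1_zero] at h
        simp only [Prod.mk.injEq, true_and, and_true] at h ⊢; omega
      · rw [L1_zero, L1_succ] at h
        rcases L3 (j', i', k', l') with ⟨a, b⟩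
        simp only [L2, Prod.mk.injEq, true_and, and_true] at h; omega
      · rw [L1_succ, L1_zero] at h
        rcases L3 (j, i, k, l) with ⟨a, b⟩
        simp only [L2, Prod.mk.injEq, true_and, and_true] at h; omega
      · rw [L1_succ, L1_succ] at h
        have h3 := inj_L2 h
        have hd : deg (j, i, k, l) ≤ d := by simp only [deg] at hw ⊢; omega
        have hd' : deg (j', i', k', l') ≤ d := by simp only [deg] at hw' ⊢; omega
        have := (ih _ _ hd hd').2 h3
        simp only [Prod.mk.injEq, true_and, and_true] at this ⊢; omega
    have h3 : ∀ w w' : NW, deg w ≤ d + 1 → deg w' ≤ d + 1 → L3 w = L3 w' → w = w' := by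
      have key : ∀ j' i' k' l' i k l : ℕ, L3 (0, i, k, l) ≠ L3 (j' + 1, i', k', l') := by
        intro j' i' k' l' i k l h
        rw [L3_zero, L3_succ] at h
        rcases j' with _ | j'
        · rcases i' with _ | i'
          · simp only [L4] at h; rw [L1_zero] at h
            simp only [Prod.mk.injEq, true_and, and_true] at h; omega
          · simp only [L4] at h; rw [L1_succ] at h
            rcases L3 (0, i', k' + 1, l') with ⟨a, b⟩
            simp only [L2, Prod.mk.injEq, true_and, and_true] at h; omega
        · rcases i' with _ | i'
          · simp only [L4] at h; rw [L1_succ] at h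
            rcases L3 (j', k', 0, l' + 1) with ⟨a, b⟩
            simp only [L2, Prod.mk.injEq, true_and, and_true] at h; omega
          · simp only [L4] at h; rw [L1_succ] at h
            rcases L3 (j' + 1, i', k' + 1, l') with ⟨a, b⟩
            simp only [L2, Prod.mk.injEq, true_and, and_true] at h; omega
      rintro ⟨(_ | j), i, k, l⟩ ⟨(_ | j'), i', k', l'⟩ hw hw' h
      · rw [L3_zero, L3_zero] at h
        simp only [Prod.mk.injEq, true_and, and_true] at h ⊢; omega
      · exact absurd h (key j' i' k' l' i k l)
      · exact absurd h.symm (key j i k l i' k' l')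
      · rw [L3_succ, L3_succ] at h
        have hd : deg (L4 (j, i, k, l)) ≤ d + 1 := by
          rw [deg_L4]; simp only [deg] at hw ⊢; omega
        have hd' : deg (L4 (j', i', k', l')) ≤ d + 1 := by
          rw [deg_L4]; simp only [deg] at hw' ⊢; omega
        have := inj_L4 (h1 _ _ hd hd' h)
        simp only [Prod.mk.injEq, true_and, and_true] at this ⊢; omega
    exact fun w w' hw hw' => ⟨h1 w w' hw hw', h3 w w' hw hw'⟩

lemma inj_L1 : Function.Injective L1 := fun w w' h =>
  (inj_aux (max (deg w) (deg w')) w w' (le_max_left _ _) (le_max_right _ _)).1 h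

lemma inj_L3 : Function.Injective L3 := fun w w' h =>
  (inj_aux (max (deg w) (deg w')) w w' (le_max_left _ _) (le_max_right _ _)).2 h

/-- If `L1 u = L2 w'` then `u` has positive first coordinate and `w'` is `L3` of its
predecessor. -/
lemma L1_eq_L2 {u w' : NW} (h : L1 u = L2 w') :
    ∃ p : NW, u = L2 p ∧ w' = L3 p := by
  rcases u with ⟨(_ | j), i, k, l⟩
  · rw [L1_zero] at h
    rcases w' with ⟨a, b⟩
    simp only [L2, Prod.mk.injEq, true_and, and_true] at h; omega
  · rw [L1_succ] at h
    exact ⟨(j, i, k, l), rfl, (inj_L2 h).symm⟩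

lemma fst_L2 (w : NW) : (L2 w).1 = w.1 + 1 := rfl

end NW

variable (k : Type*) [Field k]

inductive SRel : FreeAlgebra k (Fin 4) → FreeAlgebra k (Fin 4) → Prop
  | f1 : SRel (FreeAlgebra.ι k 2 * FreeAlgebra.ι k 0) (FreeAlgebra.ι k 0 * FreeAlgebra.ι k 2)
  | f2 : SRel (FreeAlgebra.ι k 2 * FreeAlgebra.ι k 1) (FreeAlgebra.ι k 0 * FreeAlgebra.ι k 3)
  | f3 : SRel (FreeAlgebra.ι k 3 * FreeAlgebra.ι k 0) (FreeAlgebra.ι k 1 * FreeAlgebra.ι k 2)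
  | f4 : SRel (FreeAlgebra.ι k 3 * FreeAlgebra.ι k 1) (FreeAlgebra.ι k 1 * FreeAlgebra.ι k 3)
  | f5 : SRel (FreeAlgebra.ι k 0 * FreeAlgebra.ι k 1) (FreeAlgebra.ι k 1 * FreeAlgebra.ι k 2)
  | f6 : SRel (FreeAlgebra.ι k 3 * FreeAlgebra.ι k 2) (FreeAlgebra.ι k 0 * FreeAlgebra.ι k 3)

abbrev SAlg := RingQuot (SRel k)

def xS (i : Fin 4) : SAlg k := RingQuot.mkAlgHom k (SRel k) (FreeAlgebra.ι k i)

namespace SyzAux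

lemma rel_f1 : xS k 2 * xS k 0 = xS k 0 * xS k 2 := by
  simpa only [map_mul, xS] using RingQuot.mkAlgHom_rel k SRel.f1
lemma rel_f2 : xS k 2 * xS k 1 = xS k 0 * xS k 3 := by
  simpa only [map_mul, xS] using RingQuot.mkAlgHom_rel k SRel.f2
lemma rel_f3 : xS k 3 * xS k 0 = xS k 1 * xS k 2 := by
  simpa only [map_mul, xS] using RingQuot.mkAlgHom_rel k SRel.f3
lemma rel_f4 : xS k 3 * xS k 1 = xS k 1 * xS k 3 := by
  simpa only [map_mul, xS] using RingQuot.mkAlgHom_rel k SRel.f4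
lemma rel_f5 : xS k 0 * xS k 1 = xS k 1 * xS k 2 := by
  simpa only [map_mul, xS] using RingQuot.mkAlgHom_rel k SRel.f5
lemma rel_f6 : xS k 3 * xS k 2 = xS k 0 * xS k 3 := by
  simpa only [map_mul, xS] using RingQuot.mkAlgHom_rel k SRel.f6

lemma comm20 (i : ℕ) : xS k 2 * xS k 0 ^ i = xS k 0 ^ i * xS k 2 := by
  induction i with
  | zero => simp
  | succ i ih =>
    rw [pow_succ', ← mul_assoc, rel_f1, mul_assoc, ih, ← mul_assoc]

lemma comm32 (n : ℕ) : xS k 3 * xS k 2 ^ n = xS k 0 ^ n * xS k 3 := by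
  induction n with
  | zero => simp
  | succ n ih =>
    rw [pow_succ', ← mul_assoc, rel_f6, mul_assoc, ih, ← mul_assoc, pow_succ']



open NW Finsupp

def mw (w : NW) : SAlg k :=
  xS k 1 ^ w.1 * (xS k 0 ^ w.2.1 * (xS k 2 ^ w.2.2.1 * xS k 3 ^ w.2.2.2))

lemma mw_succ (j i l m : ℕ) : mw k (j + 1, i, l, m) = xS k 1 * mw k (j, i, l, m) := by
  simp only [mw, pow_succ', mul_assoc]

lemma K2 (w : NW) : xS k 1 * mw k w = mw k (L2 w) := by
  rcases w with ⟨j, i, l, m⟩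
  rw [show L2 (j, i, l, m) = (j + 1, i, l, m) from rfl, mw_succ]

lemma K4 (w : NW) : xS k 3 * mw k w = mw k (L4 w) := by
  rcases w with ⟨j, i, l, m⟩
  induction j with
  | zero =>
    rcases i with _ | i
    · simp only [mw, L4, pow_zero, pow_one, one_mul, pow_succ', mul_assoc]
      rw [← mul_assoc, comm32, mul_assoc]
    · simp only [mw, L4, pow_zero, pow_one, one_mul, pow_succ', mul_assoc]
      rw [← mul_assoc, rel_f3, mul_assoc, ← mul_assoc (xS k 2), comm20, mul_assoc]
  | succ j ih =>
    rw [mw_succ, ← mul_assoc, rel_f4, mul_assoc, ih, K2, L4_succ]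

lemma K13_aux : ∀ d : ℕ, ∀ w : NW, NW.deg w ≤ d →
    (xS k 0 * mw k w = mw k (L1 w)) ∧ (xS k 2 * mw k w = mw k (L3 w)) := by
  have K1z : ∀ i l m : ℕ, xS k 0 * mw k (0, i, l, m) = mw k (L1 (0, i, l, m)) := by
    intro i l m
    rw [L1_zero]
    simp only [mw, pow_zero, one_mul, pow_succ', mul_assoc]
  have K3z : ∀ i l m : ℕ, xS k 2 * mw k (0, i, l, m) = mw k (L3 (0, i, l, m)) := by
    intro i l m
    rw [L3_zero]
    simp only [mw, pow_zero, one_mul, pow_succ', mul_assoc]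
    rw [← mul_assoc, comm20, mul_assoc]
  intro d
  induction d with
  | zero =>
    rintro ⟨j, i, l, m⟩ hw
    have hj : j = 0 := by simp only [NW.deg] at hw; omega
    subst hj
    exact ⟨K1z i l m, K3z i l m⟩
  | succ d ih =>
    have h1 : ∀ w : NW, NW.deg w ≤ d + 1 → xS k 0 * mw k w = mw k (L1 w) := by
      rintro ⟨(_ | j), i, l, m⟩ hw
      · exact K1z i l m
      · have hd : NW.deg (j, i, l, m) ≤ d := by simp only [NW.deg] at hw ⊢; omega
        rw [mw_succ, ← mul_assoc, rel_f5, mul_assoc, (ih _ hd).2, K2, L1_succ]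
    have h3 : ∀ w : NW, NW.deg w ≤ d + 1 → xS k 2 * mw k w = mw k (L3 w) := by
      rintro ⟨(_ | j), i, l, m⟩ hw
      · exact K3z i l m
      · have hd : NW.deg (L4 (j, i, l, m)) ≤ d + 1 := by
          rw [deg_L4]; simp only [NW.deg] at hw ⊢; omega
        rw [mw_succ, ← mul_assoc, rel_f2, mul_assoc, K4, h1 _ hd, L3_succ]
    exact fun w hw => ⟨h1 w hw, h3 w hw⟩

lemma nmul (a b : SAlg k) : -a * b = -(a * b) := neg_mul a b
lemma mnul (a b : SAlg k) : a * -b = -(a * b) := mul_neg a b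
lemma addneg (a : SAlg k) : a + -a = 0 := add_neg_cancel a

lemma K1 (w : NW) : xS k 0 * mw k w = mw k (L1 w) := (K13_aux k (NW.deg w) w le_rfl).1
lemma K3 (w : NW) : xS k 2 * mw k w = mw k (L3 w) := (K13_aux k (NW.deg w) w le_rfl).2

def gens : Fin 4 → Module.End k (NW →₀ k) :=
  ![Finsupp.lmapDomain k k L1, Finsupp.lmapDomain k k L2,
    Finsupp.lmapDomain k k L3, Finsupp.lmapDomain k k L4]

lemma preRel : ∀ ⦃x y : FreeAlgebra k (Fin 4)⦄, SRel k x y →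
    FreeAlgebra.lift k (gens k) x = FreeAlgebra.lift k (gens k) y := by
  intro x y h
  cases h <;>
    simp only [map_mul, FreeAlgebra.lift_ι_apply, gens, Matrix.cons_val_zero,
      Matrix.cons_val_one, Matrix.head_cons, Matrix.cons_val_two, Matrix.tail_cons,
      Matrix.cons_val_three, Module.End.mul_eq_comp, ← Finsupp.lmapDomain_comp] <;>
    exact congrArg _ (funext fun w => by
      first
        | exact L3_L1 w
        | exact L3_L2 w
        | exact L4_L1 w
        | exact L4_L2 w
        | exact L1_L2 w
        | exact L4_L3 w)

def Phi : SAlg k →ₐ[k] Module.End k (NW →₀ k) :=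
  RingQuot.liftAlgHom k ⟨FreeAlgebra.lift k (gens k), preRel k⟩

lemma Phi_xS (i : Fin 4) : Phi k (xS k i) = gens k i := by
  rw [xS, Phi, RingQuot.liftAlgHom_mkAlgHom_apply, FreeAlgebra.lift_ι_apply]

def e0 : NW := (0, 0, 0, 0)

def piV (s : SAlg k) : NW →₀ k := Phi k s (Finsupp.single (e0) 1)

def iotaV : (NW →₀ k) →ₗ[k] SAlg k := Finsupp.linearCombination k (mw k)

lemma piV_add (s t : SAlg k) : piV k (s + t) = piV k s + piV k t := by
  simp only [piV, map_add, LinearMap.add_apply]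

lemma piV_smul (c : k) (s : SAlg k) : piV k (c • s) = c • piV k s := by
  simp only [piV, map_smul, LinearMap.smul_apply]

lemma piV_zero : piV k 0 = 0 := by simp only [piV, map_zero, LinearMap.zero_apply]

lemma piV_one : piV k 1 = Finsupp.single (e0) 1 := by
  simp only [piV, map_one, Module.End.one_apply]

lemma piV_gen_mul (i : Fin 4) (s : SAlg k) :
    piV k (xS k i * s) = gens k i (piV k s) := by
  simp only [piV, map_mul, Phi_xS, Module.End.mul_apply]

lemma iotaV_mapDomain (x : SAlg k) (f : NW → NW)
    (hf : ∀ w, x * mw k w = mw k (f w)) (F : NW →₀ k) :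
    iotaV k (Finsupp.mapDomain f F) = x * iotaV k F := by
  rw [iotaV, Finsupp.linearCombination_mapDomain]
  induction F using Finsupp.induction_linear with
  | zero => simp
  | add F G hF hG => rw [map_add, map_add, hF, hG, mul_add]
  | single a b =>
    rw [Finsupp.linearCombination_single, Finsupp.linearCombination_single]
    rw [Function.comp_apply, ← hf, mul_smul_comm]

lemma recon (s : SAlg k) : iotaV k (piV k s) = s := by
  have key : ∀ w : FreeAlgebra k (Fin 4), ∀ s : SAlg k, iotaV k (piV k s) = s →
      iotaV k (piV k (RingQuot.mkAlgHom k (SRel k) w * s)) =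
        RingQuot.mkAlgHom k (SRel k) w * s := by
    intro w
    induction w using FreeAlgebra.induction with
    | grade0 r =>
      intro s hs
      rw [AlgHom.commutes, ← Algebra.smul_def, piV_smul, map_smul, hs]
    | grade1 i =>
      intro s hs
      have hx : RingQuot.mkAlgHom k (SRel k) (FreeAlgebra.ι k i) = xS k i := rfl
      rw [hx, piV_gen_mul]
      fin_cases i
      · show iotaV k ((Finsupp.lmapDomain k k L1) (piV k s)) = _
        rw [Finsupp.lmapDomain_apply, iotaV_mapDomain k _ _ (K1 k), hs]
        rfl
      · show iotaV k ((Finsupp.lmapDomain k k L2) (piV k s)) = _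
        rw [Finsupp.lmapDomain_apply, iotaV_mapDomain k _ _ (K2 k), hs]
        rfl
      · show iotaV k ((Finsupp.lmapDomain k k L3) (piV k s)) = _
        rw [Finsupp.lmapDomain_apply, iotaV_mapDomain k _ _ (K3 k), hs]
        rfl
      · show iotaV k ((Finsupp.lmapDomain k k L4) (piV k s)) = _
        rw [Finsupp.lmapDomain_apply, iotaV_mapDomain k _ _ (K4 k), hs]
        rfl
    | mul a b ha hb =>
      intro s hs
      rw [map_mul, mul_assoc]
      exact ha _ (hb s hs)
    | add a b ha hb =>
      intro s hs
      rw [map_add, add_mul, piV_add, map_add, ha s hs, hb s hs]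
  obtain ⟨w, rfl⟩ := RingQuot.mkAlgHom_surjective k (SRel k) s
  have h1 : iotaV k (piV k (1 : SAlg k)) = 1 := by
    rw [piV_one, iotaV, Finsupp.linearCombination_single, one_smul]
    simp [mw, e0]
  simpa using key w 1 h1

end SyzAux

open SyzAux

theorem syz_x1_x2_principal :
    {p : SAlg k × SAlg k | xS k 0 * p.1 + xS k 1 * p.2 = 0} =
      (Submodule.span (SAlg k)ᵐᵒᵖ {(xS k 1, -(xS k 2))} :
        Submodule (SAlg k)ᵐᵒᵖ (SAlg k × SAlg k)) := by
  ext p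
  simp only [Set.mem_setOf_eq, SetLike.mem_coe, Submodule.mem_span_singleton]
  constructor
  · intro hp
    set F := piV k p.1 with hF
    set G := piV k p.2 with hG
    have hE : Finsupp.mapDomain NW.L1 F + Finsupp.mapDomain NW.L2 G = 0 := by
      have h0 := congrArg (piV k) hp
      rw [piV_add, piV_gen_mul, piV_gen_mul, piV_zero] at h0
      simpa only [gens, Matrix.cons_val_zero, Matrix.cons_val_one, Matrix.head_cons,
        Finsupp.lmapDomain_apply, ← hF, ← hG] using h0
    have hEval : ∀ s : NW, F.mapDomain NW.L1 s + G.mapDomain NW.L2 s = 0 := by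
      intro s
      have := DFunLike.congr_fun hE s
      simpa only [Finsupp.add_apply, Finsupp.coe_zero, Pi.zero_apply] using this
    have hi : ∀ q : NW, F (NW.L2 q) + G (NW.L3 q) = 0 := by
      intro q
      have := hEval (NW.L1 (NW.L2 q))
      rwa [Finsupp.mapDomain_apply NW.inj_L1, NW.L1_L2,
        Finsupp.mapDomain_apply NW.inj_L2] at this
    have hii : ∀ i l m : ℕ, F (0, i, l, m) = 0 := by
      intro i l m
      have h2 : NW.L1 (0, i, l, m) ∉ Set.range NW.L2 := by
        rw [NW.L1_zero]
        rintro ⟨⟨a, b, c, d⟩, hq⟩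
        simp only [NW.L2, Prod.mk.injEq, true_and, and_true] at hq
        omega
      have := hEval (NW.L1 (0, i, l, m))
      rwa [Finsupp.mapDomain_apply NW.inj_L1,
        Finsupp.mapDomain_notin_range G _ h2, add_zero] at this
    have hiii : ∀ q : NW, q ∉ Set.range NW.L3 → G q = 0 := by
      intro q hq
      have hn : NW.L2 q ∉ Set.range NW.L1 := by
        rintro ⟨u, hu⟩
        obtain ⟨r, _, hr2⟩ := NW.L1_eq_L2 hu
        exact hq ⟨r, hr2.symm⟩
      have := hEval (NW.L2 q)
      rwa [Finsupp.mapDomain_notin_range F _ hn, zero_add,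
        Finsupp.mapDomain_apply NW.inj_L2] at this
    have hinj : Set.InjOn NW.L2 (NW.L2 ⁻¹' ↑F.support) := NW.inj_L2.injOn
    set P : NW →₀ k := Finsupp.comapDomain NW.L2 F hinj with hPdef
    have hP : ∀ q, P q = F (NW.L2 q) := fun q => rfl
    have hP2 : Finsupp.mapDomain NW.L2 P = F := by
      ext s
      rcases s with ⟨(_ | j), i, l, m⟩
      · rw [Finsupp.mapDomain_notin_range]
        · exact (hii i l m).symm
        · rintro ⟨⟨a, b, c, d⟩, hq⟩
          simp only [NW.L2, Prod.mk.injEq, true_and, and_true] at hq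
          omega
      · have hs : ((j : ℕ) + 1, i, l, m) = NW.L2 (j, i, l, m) := rfl
        rw [hs, Finsupp.mapDomain_apply NW.inj_L2, hP]
    have hP3 : Finsupp.mapDomain NW.L3 P = -G := by
      ext s
      by_cases hs : s ∈ Set.range NW.L3
      · obtain ⟨q, rfl⟩ := hs
        rw [Finsupp.mapDomain_apply NW.inj_L3, hP, Finsupp.neg_apply]
        exact eq_neg_of_add_eq_zero_left (hi q)
      · rw [Finsupp.mapDomain_notin_range _ _ hs, Finsupp.neg_apply, hiii s hs, neg_zero]
    refine ⟨MulOpposite.op (iotaV k P), ?_⟩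
    have e1 : p.1 = xS k 1 * iotaV k P := by
      calc p.1 = iotaV k F := (recon k p.1).symm
      _ = iotaV k (Finsupp.mapDomain NW.L2 P) := by rw [hP2]
      _ = xS k 1 * iotaV k P := iotaV_mapDomain k _ _ (K2 k) P
    have e2 : p.2 = -(xS k 2 * iotaV k P) := by
      calc p.2 = iotaV k G := (recon k p.2).symm
      _ = iotaV k (-(Finsupp.mapDomain NW.L3 P)) := by rw [hP3, neg_neg]
      _ = -(iotaV k (Finsupp.mapDomain NW.L3 P)) := map_neg _ _
      _ = -(xS k 2 * iotaV k P) := by rw [iotaV_mapDomain k _ _ (K3 k)]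
    refine Prod.ext_iff.mpr ⟨?_, ?_⟩
    · exact e1.symm
    · show -xS k 2 * iotaV k P = p.2
      rw [nmul]
      exact e2.symm
  · rintro ⟨a, rfl⟩
    have h1 : (a • ((xS k 1, -(xS k 2)) : SAlg k × SAlg k)).1 = xS k 1 * a.unop := rfl
    have h2 : (a • ((xS k 1, -(xS k 2)) : SAlg k × SAlg k)).2 = -(xS k 2) * a.unop := rfl
    show xS k 0 * _ + xS k 1 * _ = 0
    rw [h1, h2, nmul, mnul, ← mul_assoc, ← mul_assoc, rel_f5]
    exact addneg k _
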